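/- arXiv:2201.00473 — 4 statements merged into one kernel-verified Lean document; each statement's English description precedes it below -/
import Mathlib

section
/- For a positive odd integer n and any integer k, define the Gauss-type sum G_k(n) = ((1-i)/2 + (-1/n)(1+i)/2) · Σ_{a mod n} (a/n) e(ak/n), where (·/n) is the Jacobi symbol and e(x) = exp(2πix). Then G_k is multiplicative in n: for coprime odd positive integers m and n, G_k(mn) = G_k(m)·G_k(n). -/
open Complex Finset

/-- The Gauss-type sum `G_k(n)` for odd `n`. -/
noncomputable def gaussG (k : ℤ) (n : ℕ) : ℂ :=
  ((1 - Complex.I) / 2 + (jacobiSym (-1) n : ℂ) * (1 + Complex.I) / 2) *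
    ∑ a ∈ Finset.range n, (jacobiSym (a : ℤ) n : ℂ) *
      Complex.exp (2 * Real.pi * Complex.I * ((a : ℂ) * (k : ℂ) / (n : ℂ)))

/-! As `b` and `c` run over the residues mod `m` and mod `n`, `a = b n + c m` runs over the
residues mod `mn`, and then `(a/mn) = (n/m)(m/n) (b/m)(c/n)` and `e(ak/mn) = e(bk/m) e(ck/n)`.
Hence the character sums multiply up to the reciprocity sign `(n/m)(m/n) = (-1)^{(m-1)(n-1)/4}`,
which the prefactor absorbs: the prefactor is `1` or `-i` according as `n ≡ 1` or `3 (mod 4)`. -/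

open Function

theorem Function.Periodic.map_val_intCast {M : Type*} {f : ℤ → M} {N : ℕ} [NeZero N]
    (hf : Periodic f N) (x : ℤ) : f (x : ZMod N).val = f x := by
  conv_rhs => rw [← hf.sub_int_mul_eq (x / N)]
  rw [ZMod.val_intCast, Int.emod_def, Int.cast_id, mul_comm]

theorem Finset.sum_range_eq_sum_zmod_val {M : Type*} [AddCommMonoid M] (N : ℕ) [NeZero N]
    (f : ℕ → M) : ∑ a ∈ range N, f a = ∑ x : ZMod N, f x.val := by
  obtain ⟨n, rfl⟩ := Nat.exists_eq_succ_of_ne_zero (NeZero.ne N)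
  exact Finset.sum_range f

theorem ZMod.bijective_val_mul_add_val_mul {m n : ℕ} [NeZero m] [NeZero n] (h : m.Coprime n) :
    Bijective fun p : ZMod m × ZMod n => ((p.1.val * n + p.2.val * m : ℤ) : ZMod (m * n)) := by
  refine (Fintype.bijective_iff_injective_and_card _).mpr ⟨?_, by simp [ZMod.card]⟩
  rintro ⟨b, c⟩ ⟨b', c'⟩ hbc
  have hm := congrArg (ZMod.cast : ZMod (m * n) → ZMod m) hbc
  have hn := congrArg (ZMod.cast : ZMod (m * n) → ZMod n) hbc
  simp only [ZMod.cast_intCast (dvd_mul_right m n), ZMod.cast_intCast (dvd_mul_left n m)] at hm hn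
  push_cast at hm hn
  simp only [ZMod.natCast_self, ZMod.natCast_zmod_val, mul_zero, add_zero, zero_add] at hm hn
  rw [((ZMod.isUnit_iff_coprime n m).mpr h.symm).mul_left_inj] at hm
  rw [((ZMod.isUnit_iff_coprime m n).mpr h).mul_left_inj] at hn
  rw [hm, hn]

theorem Function.Periodic.sum_range_mul_eq_sum_sum {M : Type*} [AddCommMonoid M] {f : ℤ → M}
    {m n : ℕ} [NeZero m] [NeZero n] (h : m.Coprime n) (hf : Periodic f (m * n : ℕ)) :
    ∑ a ∈ range (m * n), f a = ∑ b ∈ range m, ∑ c ∈ range n, f (b * n + c * m) := by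
  simp_rw [sum_range_eq_sum_zmod_val, ← Fintype.sum_prod_type']
  exact (Fintype.sum_bijective _ (ZMod.bijective_val_mul_add_val_mul h) _ _
    fun p => (hf.map_val_intCast _).symm).symm

noncomputable def gaussTerm (k : ℤ) (n : ℕ) (a : ℤ) : ℂ :=
  jacobiSym a n * exp (2 * Real.pi * I * (a * k / n))

noncomputable def gaussFactor (n : ℕ) : ℂ :=
  (1 - I) / 2 + jacobiSym (-1) n * (1 + I) / 2

theorem gaussG_eq_gaussFactor_mul_sum (k : ℤ) (n : ℕ) :
    gaussG k n = gaussFactor n * ∑ a ∈ range n, gaussTerm k n a := by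
  simp [gaussG, gaussFactor, gaussTerm]

theorem gaussTerm_periodic (k : ℤ) (n : ℕ) : Periodic (gaussTerm k n) n := by
  rcases eq_or_ne n 0 with rfl | hn
  · simp [Periodic]
  intro a
  have hexp : (2 * Real.pi * I * ((a + n : ℤ) * k / n) : ℂ) =
      2 * Real.pi * I * (a * k / n) + k * (2 * Real.pi * I) := by
    field_simp
    push_cast
    ring
  rw [gaussTerm, gaussTerm, jacobiSym.mod_left' (Int.add_emod_right a n), hexp, exp_add,
    exp_int_mul_two_pi_mul_I, mul_one]

theorem gaussTerm_mul_add_mul (k : ℤ) {m n : ℕ} [NeZero m] [NeZero n] (b c : ℤ) :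
    gaussTerm k (m * n) (b * n + c * m) =
      (jacobiSym n m * jacobiSym m n : ℤ) * (gaussTerm k m b * gaussTerm k n c) := by
  have hJm : jacobiSym (b * n + c * m) m = jacobiSym b m * jacobiSym n m := by
    rw [jacobiSym.mod_left' (Int.add_mul_emod_self_right _ c m), jacobiSym.mul_left]
  have hJn : jacobiSym (b * n + c * m) n = jacobiSym c n * jacobiSym m n := by
    rw [add_comm, jacobiSym.mod_left' (Int.add_mul_emod_self_right _ b n), jacobiSym.mul_left]
  have hexp : (2 * Real.pi * I * ((b * n + c * m : ℤ) * k / (m * n : ℕ)) : ℂ) =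
      2 * Real.pi * I * (b * k / m) + 2 * Real.pi * I * (c * k / n) := by
    have : (m : ℂ) ≠ 0 := NeZero.ne _
    have : (n : ℂ) ≠ 0 := NeZero.ne _
    field_simp
    push_cast
    ring
  rw [gaussTerm, gaussTerm, gaussTerm, jacobiSym.mul_right, hJm, hJn, hexp, exp_add]
  push_cast
  ring

theorem sum_range_gaussTerm_mul (k : ℤ) {m n : ℕ} [NeZero m] [NeZero n] (h : m.Coprime n) :
    ∑ a ∈ range (m * n), gaussTerm k (m * n) a = (jacobiSym n m * jacobiSym m n : ℤ) *
      ((∑ b ∈ range m, gaussTerm k m b) * ∑ c ∈ range n, gaussTerm k n c) := by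
  rw [(gaussTerm_periodic k (m * n)).sum_range_mul_eq_sum_sum h, sum_mul_sum, mul_sum]
  simp_rw [gaussTerm_mul_add_mul, mul_sum]

theorem jacobiSym_neg_one_eq_neg_one_pow {n : ℕ} (hn : Odd n) :
    jacobiSym (-1) n = (-1) ^ (n / 2) := by
  rw [jacobiSym.at_neg_one hn, ZMod.χ₄_eq_neg_one_pow (Nat.odd_iff.mp hn)]

theorem jacobiSym_mul_jacobiSym_eq_neg_one_pow {m n : ℕ} (hm : Odd m) (hn : Odd n)
    (h : m.Coprime n) : jacobiSym n m * jacobiSym m n = (-1) ^ (m / 2 * (n / 2)) := by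
  rw [jacobiSym.quadratic_reciprocity hm hn, mul_left_comm, ← sq,
    jacobiSym.sq_one (by rw [Int.gcd_natCast_natCast]; exact h.symm), mul_one]

theorem gaussFactor_mul_mul_jacobiSym {m n : ℕ} (hm : Odd m) (hn : Odd n) (h : m.Coprime n) :
    gaussFactor (m * n) * (jacobiSym n m * jacobiSym m n : ℤ) =
      gaussFactor m * gaussFactor n := by
  rw [gaussFactor, gaussFactor, gaussFactor, jacobiSym.mul_right' _ hm.pos.ne' hn.pos.ne',
    jacobiSym_neg_one_eq_neg_one_pow hm, jacobiSym_neg_one_eq_neg_one_pow hn,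
    jacobiSym_mul_jacobiSym_eq_neg_one_pow hm hn h, pow_mul]
  rcases Nat.even_or_odd (m / 2) with hm' | hm' <;>
    rcases Nat.even_or_odd (n / 2) with hn' | hn' <;>
    norm_num [hm'.neg_one_pow, hn'.neg_one_pow, Complex.ext_iff]

theorem gaussG_multiplicative_general (k : ℤ) (m n : ℕ)
    (hmodd : Odd m) (hnodd : Odd n) (hmn : Nat.Coprime m n) :
    gaussG k (m * n) = gaussG k m * gaussG k n := by
  have : NeZero m := ⟨hmodd.pos.ne'⟩
  have : NeZero n := ⟨hnodd.pos.ne'⟩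
  simp only [gaussG_eq_gaussFactor_mul_sum]
  rw [sum_range_gaussTerm_mul k hmn, ← mul_assoc, gaussFactor_mul_mul_jacobiSym hmodd hnodd hmn]
  ring

theorem gaussG_multiplicative (k : ℤ) (m n : ℕ) (hm : 0 < m) (hn : 0 < n)
    (hmodd : Odd m) (hnodd : Odd n) (hmn : Nat.Coprime m n) :
    gaussG k (m * n) = gaussG k m * gaussG k n :=
  gaussG_multiplicative_general k m n hmodd hnodd hmn
end

section
/- Let α, β, γ be nonzero complex numbers with αβγ = 1, and define A(p^h,1) = Σ_{a+b+c=h, a,b,c ≥ 0} α^a β^b γ^c for h ≥ 0 (Schur polynomial at (α,β,γ)), and A(1,p) = αβ + αγ + βγ. Then for every h ≥ 0, A(p^{2h},1) = Σ_{a+b+c=h} α^{2a} β^{2b} γ^{2c} + A(1,p) · Σ_{a+b+c=h-1} α^{2a} β^{2b} γ^{2c}, where the second sum is 0 when h = 0. -/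
/-! Since `(1 - x t)⁻¹ = (1 + x t) (1 - x² t²)⁻¹`, we have
`∑ hₙ(x, y, z) tⁿ = ∏ (1 + x t) · ∑ hₙ(x², y², z²) t²ⁿ`, and the even part of `∏ (1 + x t)` is
`1 + e₂ t²`. Without power series: peeling off one variable, `hₙ(x, y, z) = hₙ(y, z) + x hₙ₋₁(x, y, z)`,
reduces the identity to the parity identities in two variables, `h₂ₖ₊₁(y, z) = (y + z) hₖ(y², z²)` and
`h₂ₖ₊₂(y, z) = hₖ₊₁(y², z²) + y z hₖ(y², z²)`, which follow together by induction on `k`. -/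

open Finset

/-- Complete homogeneous symmetric polynomial in three complex variables:
`hpoly h x y z = Σ_{a+b+c=h} x^a y^b z^c`. -/
noncomputable def hpoly (h : ℕ) (x y z : ℂ) : ℂ :=
  ∑ t ∈ Finset.Nat.antidiagonalTuple 3 h, x ^ (t 0) * y ^ (t 1) * z ^ (t 2)

theorem Finset.Nat.sum_antidiagonalTuple_succ {M : Type*} [AddCommMonoid M] (k n : ℕ)
    (f : (Fin (k + 1) → ℕ) → M) :
    ∑ t ∈ antidiagonalTuple (k + 1) n, f t =
      ∑ p ∈ antidiagonal n, ∑ t ∈ antidiagonalTuple k p.2, f (Fin.cons p.1 t) := by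
  change ((List.Nat.antidiagonalTuple (k + 1) n).map f).sum =
    ((List.Nat.antidiagonal n).map fun p =>
      ((List.Nat.antidiagonalTuple k p.2).map fun t => f (Fin.cons p.1 t)).sum).sum
  simp only [List.Nat.antidiagonalTuple, List.flatMap, List.map_flatten, List.map_map,
    List.sum_flatten, Function.comp_def]

section TwoVariables

variable {R : Type*} [CommSemiring R]

noncomputable def hpoly₂ (n : ℕ) (y z : R) : R :=
  ∑ p ∈ antidiagonal n, y ^ p.1 * z ^ p.2

@[simp]
theorem hpoly₂_zero (y z : R) : hpoly₂ 0 y z = 1 := by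
  simp [hpoly₂]

theorem hpoly₂_succ (n : ℕ) (y z : R) : hpoly₂ (n + 1) y z = y ^ (n + 1) + z * hpoly₂ n y z := by
  simp only [hpoly₂, Nat.sum_antidiagonal_succ', pow_zero, mul_one, mul_sum, pow_succ]
  congr 1
  exact sum_congr rfl fun _ _ => by ring

theorem hpoly₂_two_mul_add_two_of_add_one (k : ℕ) (y z : R)
    (h : hpoly₂ (2 * k + 1) y z = (y + z) * hpoly₂ k (y ^ 2) (z ^ 2)) :
    hpoly₂ (2 * k + 2) y z = hpoly₂ (k + 1) (y ^ 2) (z ^ 2) + y * z * hpoly₂ k (y ^ 2) (z ^ 2) := by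
  rw [hpoly₂_succ, h, hpoly₂_succ]
  ring

theorem hpoly₂_two_mul_add_one (k : ℕ) (y z : R) :
    hpoly₂ (2 * k + 1) y z = (y + z) * hpoly₂ k (y ^ 2) (z ^ 2) := by
  induction k with
  | zero => simp [hpoly₂_succ]
  | succ k ih =>
    rw [mul_add_one 2 k, hpoly₂_succ,
      hpoly₂_two_mul_add_two_of_add_one k y z ih, hpoly₂_succ k]
    ring

theorem hpoly₂_two_mul_add_two (k : ℕ) (y z : R) :
    hpoly₂ (2 * k + 2) y z = hpoly₂ (k + 1) (y ^ 2) (z ^ 2) + y * z * hpoly₂ k (y ^ 2) (z ^ 2) :=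
  hpoly₂_two_mul_add_two_of_add_one k y z (hpoly₂_two_mul_add_one k y z)

end TwoVariables

theorem hpoly_eq_sum_hpoly₂ (n : ℕ) (x y z : ℂ) :
    hpoly n x y z = ∑ p ∈ antidiagonal n, x ^ p.1 * hpoly₂ p.2 y z := by
  simp only [hpoly, hpoly₂, Nat.sum_antidiagonalTuple_succ, Nat.antidiagonalTuple_two, sum_map,
    mul_sum, mul_assoc]
  rfl

@[simp]
theorem hpoly_zero (x y z : ℂ) : hpoly 0 x y z = 1 := by
  simp [hpoly_eq_sum_hpoly₂]

theorem hpoly_succ (n : ℕ) (x y z : ℂ) :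
    hpoly (n + 1) x y z = hpoly₂ (n + 1) y z + x * hpoly n x y z := by
  simp only [hpoly_eq_sum_hpoly₂, Nat.sum_antidiagonal_succ, pow_zero, one_mul, mul_sum, pow_succ]
  congr 1
  exact sum_congr rfl fun _ _ => by ring

theorem hpoly_add_two (n : ℕ) (x y z : ℂ) :
    hpoly (n + 2) x y z = hpoly₂ (n + 2) y z + x * hpoly₂ (n + 1) y z + x ^ 2 * hpoly n x y z := by
  rw [hpoly_succ, hpoly_succ, mul_add, ← mul_assoc, ← sq, ← add_assoc]

theorem hpoly_two_mul_add_two (k : ℕ) (x y z : ℂ) :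
    hpoly (2 * k + 2) x y z =
      hpoly (k + 1) (x ^ 2) (y ^ 2) (z ^ 2) +
        (x * y + x * z + y * z) * hpoly k (x ^ 2) (y ^ 2) (z ^ 2) := by
  induction k with
  | zero =>
    simp only [hpoly_add_two, hpoly₂_succ, hpoly_succ, hpoly₂_zero, hpoly_zero, Nat.reduceAdd,
      mul_zero, zero_add, pow_one, mul_one]
    ring
  | succ k ih =>
    rw [hpoly_add_two, hpoly₂_two_mul_add_two, hpoly₂_two_mul_add_one, mul_add_one 2 k, ih,
      hpoly_succ (k + 1), hpoly_succ k]
    ring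

theorem hecke_even_decomposition_general (α β γ : ℂ) (h : ℕ) :
    hpoly (2 * h) α β γ =
      hpoly h (α ^ 2) (β ^ 2) (γ ^ 2) +
        (α * β + α * γ + β * γ) *
          (if h = 0 then 0 else hpoly (h - 1) (α ^ 2) (β ^ 2) (γ ^ 2)) := by
  cases h with
  | zero => simp
  | succ k => simpa [Nat.mul_succ] using hpoly_two_mul_add_two k α β γ

theorem hecke_even_decomposition (α β γ : ℂ) (hα : α ≠ 0) (hβ : β ≠ 0) (hγ : γ ≠ 0)
    (habc : α * β * γ = 1) (h : ℕ) :
    hpoly (2 * h) α β γ =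
      hpoly h (α ^ 2) (β ^ 2) (γ ^ 2) +
        (α * β + α * γ + β * γ) *
          (if h = 0 then 0 else hpoly (h - 1) (α ^ 2) (β ^ 2) (γ ^ 2)) :=
  hecke_even_decomposition_general α β γ h
end

section
/- Let A(p^h,1) be defined by the Hecke recursion A(p^{h+1},1) = A(p,1)A(p^h,1) − A(1,p)A(p^{h-1},1) + A(p^{h-2},1) with A(1,1)=1 and A(p^h,1)=0 for h<0, where A(p,1), A(1,p) ∈ ℂ. Then, with x = p^{-s}, as formal power series (or for |x| small), Σ_{h≥0} A(p^{2h+1},1) x^h · (p^s + A(1,p)) = (1 + p^s A(p,1)) · Σ_{h≥0} A(p^{2h},1) x^h. -/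
open Complex
set_option maxHeartbeats 1000000

theorem hecke_odd_even_series_identity (a : ℕ → ℂ) (A1p : ℂ)
    (h0 : a 0 = 1) (h2 : a 2 = a 1 * a 1 - A1p)
    (hrec : ∀ h : ℕ, a (h + 3) = a 1 * a (h + 2) - A1p * a (h + 1) + a h)
    (x : ℂ) (hx : x ≠ 0)
    (hodd : Summable (fun h : ℕ => ‖a (2 * h + 1) * x ^ h‖))
    (heven : Summable (fun h : ℕ => ‖a (2 * h) * x ^ h‖)) :
    (x⁻¹ + A1p) * ∑' h : ℕ, a (2 * h + 1) * x ^ h =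
      (1 + x⁻¹ * a 1) * ∑' h : ℕ, a (2 * h) * x ^ h := by
  have sO : Summable (fun h : ℕ => a (2 * h + 1) * x ^ h) := hodd.of_norm
  have sE : Summable (fun h : ℕ => a (2 * h) * x ^ h) := heven.of_norm
  have sO1 : Summable (fun h : ℕ => a (2 * (h + 1) + 1) * x ^ (h + 1)) :=
    (summable_nat_add_iff 1).mpr sO
  have sE1 : Summable (fun h : ℕ => a (2 * (h + 1)) * x ^ (h + 1)) :=
    (summable_nat_add_iff 1).mpr sE
  have keyO : ∀ h : ℕ, a (2 * (h + 1) + 1) * x ^ (h + 1) * x⁻¹ = a (2 * h + 3) * x ^ h := by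
    intro h
    have e : 2 * (h + 1) + 1 = 2 * h + 3 := by ring
    rw [e, pow_succ, ← mul_assoc, mul_assoc, mul_inv_cancel₀ hx, mul_one]
  have keyE : ∀ h : ℕ, a (2 * (h + 1)) * x ^ (h + 1) * x⁻¹ = a (2 * h + 2) * x ^ h := by
    intro h
    have e : 2 * (h + 1) = 2 * h + 2 := by ring
    rw [e, pow_succ, ← mul_assoc, mul_assoc, mul_inv_cancel₀ hx, mul_one]
  have sT : Summable (fun h : ℕ => a (2 * h + 3) * x ^ h) :=
    (sO1.mul_right x⁻¹).congr keyO
  have sS2 : Summable (fun h : ℕ => a (2 * h + 2) * x ^ h) :=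
    (sE1.mul_right x⁻¹).congr keyE
  set O := ∑' h : ℕ, a (2 * h + 1) * x ^ h with hOdef
  set E := ∑' h : ℕ, a (2 * h) * x ^ h with hEdef
  set T := ∑' h : ℕ, a (2 * h + 3) * x ^ h with hTdef
  set S2 := ∑' h : ℕ, a (2 * h + 2) * x ^ h with hS2def
  have hO : O = a 1 + x * T := by
    rw [hOdef, Summable.tsum_eq_zero_add sO]
    congr 1
    · norm_num
    · rw [hTdef, ← tsum_mul_left]
      apply tsum_congr
      intro h
      have e : 2 * (h + 1) + 1 = 2 * h + 3 := by ring
      rw [e, pow_succ]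
      ring
  have hE : E = 1 + x * S2 := by
    rw [hEdef, Summable.tsum_eq_zero_add sE]
    congr 1
    · simpa using h0
    · rw [hS2def, ← tsum_mul_left]
      apply tsum_congr
      intro h
      have e : 2 * (h + 1) = 2 * h + 2 := by ring
      rw [e, pow_succ]
      ring
  have hT : T = a 1 * S2 - A1p * O + E := by
    rw [hTdef]
    calc (∑' h : ℕ, a (2 * h + 3) * x ^ h)
        = ∑' h : ℕ, (a 1 * (a (2 * h + 2) * x ^ h) - A1p * (a (2 * h + 1) * x ^ h)
            + a (2 * h) * x ^ h) := by
          apply tsum_congr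
          intro h
          rw [hrec (2 * h)]
          ring
      _ = a 1 * S2 - A1p * O + E := by
          rw [Summable.tsum_add ((sS2.mul_left _).sub (sO.mul_left _)) sE,
            Summable.tsum_sub (sS2.mul_left _) (sO.mul_left _), tsum_mul_left, tsum_mul_left]
  have key2 : O * (1 + A1p * x) = E * (a 1 + x) := by
    have h1 : O = a 1 + x * (a 1 * S2 - A1p * O + E) := by rw [← hT]; exact hO
    have hh2 : x * S2 = E - 1 := by linear_combination -hE
    linear_combination h1 + a 1 * hh2
  field_simp
  linear_combination key2
end

section
/- Let p ≥ 17 be a prime, and let z, z' ∈ ℂ with |z| ≤ 3p^{5/14} and |z'| ≤ 3p^{5/14}. If p²z + pz·conj(z') + conj(z') = p²z' + pz'·conj(z) + conj(z), then z = z'. -/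
open Complex ComplexConjugate

/-!
Comparing real parts of the identity gives `(p² - 1)(Re z - Re z') = 0`; once the real parts agree,
the imaginary parts give `(p² + 2p Re z + 1)(Im z - Im z') = 0`. The second factor is positive
because `2p |Re z| ≤ 6 p^{19/14} ≤ p²`, using `6 ≤ 17^{9/14}` (i.e. `6^14 ≤ 17^9`).
-/

namespace DeterminationKeyStep

variable {p : ℝ} {z z' : ℂ}

theorem re_eq_of_sq_ne_one (hp : p ^ 2 ≠ 1)
    (h : (p : ℂ) ^ 2 * z + p * z * conj z' + conj z' = (p : ℂ) ^ 2 * z' + p * z' * conj z + conj z) :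
    z.re = z'.re := by
  have hre := congrArg re h
  simp only [add_re, mul_re, mul_im, conj_re, conj_im, ofReal_re, ofReal_im, sq] at hre
  have : (p ^ 2 - 1) * (z.re - z'.re) = 0 := by linear_combination hre
  exact sub_eq_zero.mp ((mul_eq_zero.mp this).resolve_left (sub_ne_zero.mpr hp))

theorem im_eq_of_re_eq (hre : z.re = z'.re) (hp : p ^ 2 + 2 * p * z.re + 1 ≠ 0)
    (h : (p : ℂ) ^ 2 * z + p * z * conj z' + conj z' = (p : ℂ) ^ 2 * z' + p * z' * conj z + conj z) :
    z.im = z'.im := by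
  have him := congrArg im h
  simp only [add_im, mul_re, mul_im, conj_re, conj_im, ofReal_re, ofReal_im, sq] at him
  have : (p ^ 2 + 2 * p * z.re + 1) * (z.im - z'.im) = 0 := by
    rw [hre] at him ⊢; linear_combination him
  exact sub_eq_zero.mp ((mul_eq_zero.mp this).resolve_left hp)

theorem six_le_rpow_nine_div_fourteen {x : ℝ} (hx : 17 ≤ x) : 6 ≤ x ^ ((9 : ℝ) / 14) := by
  have h17 : (6 : ℝ) ≤ 17 ^ ((9 : ℝ) / 14) := by
    rw [div_eq_mul_inv, Real.rpow_mul (by norm_num),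
      Real.le_rpow_inv_iff_of_pos (by norm_num) (by positivity) (by norm_num)]
    norm_num
  exact h17.trans (Real.rpow_le_rpow (by norm_num) hx (by norm_num))

theorem two_mul_mul_three_mul_rpow_lt_sq_add_one {x : ℝ} (hx : 17 ≤ x) :
    2 * x * (3 * x ^ ((5 : ℝ) / 14)) < x ^ 2 + 1 := by
  have hx0 : 0 < x := by linarith
  have hsplit : x ^ ((5 : ℝ) / 14) * x ^ ((9 : ℝ) / 14) = x := by
    rw [← Real.rpow_add hx0]; norm_num
  calc 2 * x * (3 * x ^ ((5 : ℝ) / 14)) = x * x ^ ((5 : ℝ) / 14) * 6 := by ring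
    _ ≤ x * x ^ ((5 : ℝ) / 14) * x ^ ((9 : ℝ) / 14) := by
      gcongr; exact six_le_rpow_nine_div_fourteen hx
    _ = x ^ 2 := by rw [mul_assoc, hsplit, sq]
    _ < x ^ 2 + 1 := lt_add_one _

end DeterminationKeyStep

open DeterminationKeyStep in
theorem determination_key_step_general (p : ℕ) (hp17 : 17 ≤ p) (z z' : ℂ)
    (hz : ‖z‖ ≤ 3 * (p : ℝ) ^ ((5 : ℝ) / 14))
    (heq : (p : ℂ) ^ 2 * z + (p : ℂ) * z * (starRingEnd ℂ) z' + (starRingEnd ℂ) z' =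
      (p : ℂ) ^ 2 * z' + (p : ℂ) * z' * (starRingEnd ℂ) z + (starRingEnd ℂ) z) :
    z = z' := by
  have hpR : (17 : ℝ) ≤ p := by exact_mod_cast hp17
  rw [← ofReal_natCast] at heq
  have hre := re_eq_of_sq_ne_one (ne_of_gt (by nlinarith)) heq
  have hlt : 2 * p * |z.re| < (p : ℝ) ^ 2 + 1 :=
    lt_of_le_of_lt (by gcongr; exact (abs_re_le_norm z).trans hz)
      (two_mul_mul_three_mul_rpow_lt_sq_add_one hpR)
  have hpos : (p : ℝ) ^ 2 + 2 * p * z.re + 1 ≠ 0 := by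
    nlinarith [neg_abs_le z.re]
  exact Complex.ext hre (im_eq_of_re_eq hre hpos heq)

theorem determination_key_step (p : ℕ) (hp : p.Prime) (hp17 : 17 ≤ p) (z z' : ℂ)
    (hz : ‖z‖ ≤ 3 * (p : ℝ) ^ ((5 : ℝ) / 14))
    (hz' : ‖z'‖ ≤ 3 * (p : ℝ) ^ ((5 : ℝ) / 14))
    (heq : (p : ℂ) ^ 2 * z + (p : ℂ) * z * (starRingEnd ℂ) z' + (starRingEnd ℂ) z' =
      (p : ℂ) ^ 2 * z' + (p : ℂ) * z' * (starRingEnd ℂ) z + (starRingEnd ℂ) z) :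
    z = z' :=
  determination_key_step_general p hp17 z z' hz heq
end
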